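/- arXiv:2403.04631 — 3 statements merged into one kernel-verified Lean document; each statement's English description precedes it below -/
import Mathlib

section
/- Let w(z,q) := z(1 − 2q z^{-2})^{1/2} as a formal power series in q with coefficients Laurent in z. For each n ≥ 0, Σ_{k≥0} (q^k/k!) · (2(n+k)−1)!!/z^{2(n+k)+1} = (2n−1)!!/w(z,q)^{2n+1}, i.e. the Galilean shift applied to the sequence a_n = (2n−1)!! z^{−(2n+1)} yields (2n−1)!! w(z,q)^{−(2n+1)}. -/
/-! With `x = 2q/z²` the left side is `z^{-(2n+1)} ∑ₖ (2(n+k)-1)!!/(2ᵏ k!) xᵏ`, and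
`2ᵏ (n+½)(n+3/2)⋯(n+k-½) = (2n+1)(2n+3)⋯(2n+2k-1)` identifies the coefficient as
`(2n-1)!! · C(n+½+k-1, k)`. The binomial series then sums to
`(2n-1)!! z^{-(2n+1)} (1 - x)^{-(n+½)} = (2n-1)!! (z²-2q)^{-(2n+1)/2}`; the hypothesis
`2|q| < z²` is exactly `|x| < 1`. -/

/-- `oddDF n = (2n−1)!!`, with the convention `(−1)!! = 1`. -/
def oddDF : ℕ → ℕ
  | 0 => 1
  | n + 1 => (2 * n + 1) * oddDF n

open Nat Polynomial

lemma two_pow_mul_ascPochhammer_eval_add_half_mul_oddDF {K : Type*} [Field K] [CharZero K]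
    (n k : ℕ) :
    2 ^ k * (ascPochhammer K k).eval ((n : K) + 1 / 2) * oddDF n = oddDF (n + k) := by
  induction k with
  | zero => simp
  | succ k ih =>
    rw [ascPochhammer_succ_eval, ← add_assoc, oddDF, Nat.cast_mul, ← ih]
    push_cast
    ring

lemma factorial_mul_choose_add_sub_one {R : Type*} [CommRing R] [BinomialRing R]
    (r : R) (k : ℕ) :
    k ! * Ring.choose (r + k - 1) k = (ascPochhammer R k).eval r := by
  rw [← Ring.multichoose_eq, ← nsmul_eq_mul, Ring.factorial_nsmul_multichoose_eq_ascPochhammer,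
    ascPochhammer_smeval_eq_eval]

lemma hasSum_choose_mul_pow_one_div_one_sub_rpow (a : ℝ) {x : ℝ} (hx : |x| < 1) :
    HasSum (fun k : ℕ => Ring.choose (a + k - 1) k * x ^ k) (1 / (1 - x) ^ a) := by
  have h := (Real.one_div_one_sub_rpow_hasFPowerSeriesOnBall_zero a).hasSum
    (y := x) (by simpa [← ofReal_norm] using hx)
  simpa [FormalMultilinearSeries.ofScalars_apply_eq, mul_comm] using h

lemma rpow_natCast_add_half {x : ℝ} (hx : 0 ≤ x) (n : ℕ) :
    x ^ ((n : ℝ) + 1 / 2) = √x ^ (2 * n + 1) := by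
  rw [Real.sqrt_eq_rpow, ← Real.rpow_natCast, ← Real.rpow_mul hx]
  push_cast
  ring_nf

/-- The Galilean shift applied to `a_n = (2n−1)!! z^{−(2n+1)}` yields
`(2n−1)!! w(z,q)^{−(2n+1)}` where `w(z,q) = √(z²−2q)`:
`∑_{k} (q^k/k!)(2(n+k)−1)!!/z^{2(n+k)+1} = (2n−1)!!/w(z,q)^{2n+1}`. -/
theorem galilean_shift_double_factorial (z q : ℝ) (hz : 0 < z)
    (hq : 2 * |q| < z ^ 2) (n : ℕ) :
    ∑' k : ℕ, q ^ k / (Nat.factorial k : ℝ) * (oddDF (n + k) : ℝ) / z ^ (2 * (n + k) + 1)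
      = (oddDF n : ℝ) / (Real.sqrt (z ^ 2 - 2 * q)) ^ (2 * n + 1) := by
  have hz2 : 0 < z ^ 2 := by positivity
  have hw_pos : 0 < z ^ 2 - 2 * q := by linarith [le_abs_self q]
  have hx : |2 * q / z ^ 2| < 1 := by
    rwa [abs_div, abs_mul, abs_two, abs_of_pos hz2, div_lt_one hz2]
  have hsum := (hasSum_choose_mul_pow_one_div_one_sub_rpow ((n : ℝ) + 1 / 2) hx).mul_left
    ((oddDF n : ℝ) / z ^ (2 * n + 1))
  have hw : 1 - 2 * q / z ^ 2 = (√(z ^ 2 - 2 * q) / z) ^ 2 := by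
    rw [div_pow, Real.sq_sqrt hw_pos.le]
    field_simp
  rw [hw, rpow_natCast_add_half (sq_nonneg _), Real.sqrt_sq (by positivity)] at hsum
  convert hsum.tsum_eq using 1
  · congr 1
    ext k
    rw [← two_pow_mul_ascPochhammer_eval_add_half_mul_oddDF (K := ℝ),
      ← factorial_mul_choose_add_sub_one, div_pow, ← pow_mul]
    field_simp
    ring
  · have hsqrt_pos := Real.sqrt_pos.2 hw_pos
    rw [div_pow]
    field_simp
end

section
/- Define C_1(x,t) := Σ_{i≥0} ((x²/4)^{i+1} t_i)/((i+1)!(2i+1)), C_2(x,t) := (1/2) Σ_{i,j≥0} ((x²/4)^{i+j+1} t_i t_j)/(i! j! (i+j+1)), M_1(x,r) := Σ_{i≥0} (2^{i+1}(i+1)!/(2i+1)!! − 1)(−x²/4)^{i+1} r_i/(i+1)!, and M_2(x,r) := (1/2) Σ_{i,j≥0} ((−x²/4)^{i+j+1} r_i r_j)/(i! j! (i+j+1)). Then M_2(x,r) = −C_2(x, t^G(r; −x²/4)), where t^G_n(r;q) = Σ_{k≥0} (q^k/k!) r_{n+k} and r is finitely supported. -/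
/-- The Galilean shift `t^G_n(t;q) := ∑_{k} (q^k/k!) t_{n+k}`, truncated at `N`. -/
noncomputable def tG (N : ℕ) (t : ℕ → ℂ) (q : ℂ) (n : ℕ) : ℂ :=
  ∑ k ∈ Finset.range N, q ^ k / (Nat.factorial k : ℂ) * t (n + k)

/-- `C₂(x,t) := (1/2) ∑_{i,j} (x²/4)^{i+j+1} t_i t_j/(i! j! (i+j+1))`, truncated at `N`. -/
noncomputable def C2 (N : ℕ) (x : ℂ) (t : ℕ → ℂ) : ℂ :=
  (1 / 2) * ∑ i ∈ Finset.range N, ∑ j ∈ Finset.range N,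
    (x ^ 2 / 4) ^ (i + j + 1) * t i * t j /
      ((Nat.factorial i : ℂ) * (Nat.factorial j : ℂ) * ((i : ℂ) + j + 1))

/-- `M₂(x,r) := (1/2) ∑_{i,j} (−x²/4)^{i+j+1} r_i r_j/(i! j! (i+j+1))`, truncated at `N`. -/
noncomputable def M2 (N : ℕ) (x : ℂ) (r : ℕ → ℂ) : ℂ :=
  (1 / 2) * ∑ i ∈ Finset.range N, ∑ j ∈ Finset.range N,
    (-(x ^ 2 / 4)) ^ (i + j + 1) * r i * r j /
      ((Nat.factorial i : ℂ) * (Nat.factorial j : ℂ) * ((i : ℂ) + j + 1))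

/-!
Write `F_t(v) = ∑ t_i v^i / i!` and `Q_t(q) = ∑ q^(i+j+1) t_i t_j / (i! j! (i+j+1))`, so that
`C₂(x,t) = Q_t(x²/4)/2` and `M₂(x,r) = Q_r(-x²/4)/2`. `Q_t` is the antiderivative of `F_t²`
vanishing at `0`, and the Galilean shift is a translation: `F_{t^G(r;s)}(v) = F_r(v + s)`.
Hence `Q_{t^G(r;s)}(v) = Q_r(v + s) - Q_r(s)`, which at `v = -s` is `-Q_r(s)`.
-/

open Polynomial Finset Nat

theorem Polynomial.eq_of_derivative_eq_of_eval_zero_eq {R : Type*} [Ring R]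
    [IsAddTorsionFree R] {p q : R[X]} (hd : derivative p = derivative q)
    (h0 : p.eval 0 = q.eval 0) : p = q := by
  have hpq := eq_C_of_derivative_eq_zero (p := p - q) (by rw [derivative_sub, hd, sub_self])
  rw [coeff_zero_eq_eval_zero, eval_sub, h0, sub_self, C_0] at hpq
  exact sub_eq_zero.mp hpq

section QuadFormPoly

variable {K : Type*} [Field K]

noncomputable def egf (N : ℕ) (t : ℕ → K) : K[X] :=
  ∑ i ∈ range N, C (t i / i !) * X ^ i

noncomputable def quadFormPoly (N : ℕ) (t : ℕ → K) : K[X] :=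
  ∑ i ∈ range N, ∑ j ∈ range N,
    C (t i * t j / (i ! * j ! * ((i : K) + j + 1))) * X ^ (i + j + 1)

theorem coeff_egf (N : ℕ) (t : ℕ → K) (n : ℕ) :
    (egf N t).coeff n = if n < N then t n / n ! else 0 := by
  simp [egf, finsetSum_coeff]

theorem eval_quadFormPoly (N : ℕ) (t : ℕ → K) (q : K) :
    (quadFormPoly N t).eval q = ∑ i ∈ range N, ∑ j ∈ range N,
      q ^ (i + j + 1) * t i * t j / (i ! * j ! * ((i : K) + j + 1)) := by
  simp only [quadFormPoly, eval_finsetSum, eval_mul, eval_C, eval_pow, eval_X]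
  refine sum_congr rfl fun i _ => sum_congr rfl fun j _ => ?_
  ring

theorem quadFormPoly_eval_zero (N : ℕ) (t : ℕ → K) : (quadFormPoly N t).eval 0 = 0 := by
  simp [eval_quadFormPoly]

theorem derivative_quadFormPoly [CharZero K] (N : ℕ) (t : ℕ → K) :
    derivative (quadFormPoly N t) = egf N t ^ 2 := by
  rw [sq, egf, sum_mul_sum, quadFormPoly]
  simp only [derivative_sum, derivative_C_mul_X_pow]
  refine sum_congr rfl fun i _ => sum_congr rfl fun j _ => ?_
  have hij : ((i : K) + j + 1) ≠ 0 := by exact_mod_cast (i + j).succ_ne_zero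
  rw [mul_mul_mul_comm, ← C_mul, ← pow_add, add_tsub_cancel_right]
  congr 2
  push_cast
  field_simp

end QuadFormPoly

theorem egf_tG_eq_comp (N : ℕ) (r : ℕ → ℂ) (hr : ∀ n, N ≤ n → r n = 0) (s : ℂ) :
    egf N (tG N r s) = (egf N r).comp (X + C s) := by
  ext n
  rw [coeff_egf, egf]
  simp only [Polynomial.sum_comp, mul_comp, C_comp, X_pow_comp, finsetSum_coeff, coeff_C_mul,
    coeff_X_add_C_pow]
  split_ifs with hn
  · obtain ⟨L, rfl⟩ := Nat.exists_eq_add_of_le hn.le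
    have below_n : ∑ m ∈ range n, r m / m ! * (s ^ (m - n) * (m.choose n : ℂ)) = 0 :=
      sum_eq_zero fun m hm => by rw [Nat.choose_eq_zero_of_lt (mem_range.mp hm)]; simp
    have beyond_support : ∑ k ∈ range n, s ^ (L + k) / (L + k)! * r (n + (L + k)) = 0 :=
      sum_eq_zero fun k _ => by rw [hr _ (by omega), mul_zero]
    rw [sum_range_add, below_n, zero_add, tG, add_comm n L, sum_range_add, beyond_support,
      add_zero, sum_div]
    refine sum_congr rfl fun k _ => ?_
    have hfact : ((n + k)! : ℂ) ≠ 0 := by exact_mod_cast (n + k).factorial_ne_zero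
    rw [Nat.cast_add_choose, add_tsub_cancel_left]
    field_simp
  · refine (sum_eq_zero fun m hm => ?_).symm
    rw [Nat.choose_eq_zero_of_lt (by rw [mem_range] at hm; omega)]
    simp

theorem quadFormPoly_tG (N : ℕ) (r : ℕ → ℂ) (hr : ∀ n, N ≤ n → r n = 0) (s : ℂ) :
    quadFormPoly N (tG N r s) =
      (quadFormPoly N r).comp (X + C s) - C ((quadFormPoly N r).eval s) := by
  refine eq_of_derivative_eq_of_eval_zero_eq ?_ ?_
  · rw [derivative_sub, derivative_C, sub_zero, derivative_comp, derivative_X_add_C, one_mul,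
      derivative_quadFormPoly, derivative_quadFormPoly, pow_comp, egf_tG_eq_comp N r hr]
  · simp [quadFormPoly_eval_zero]

/-- `M₂(x,r) = −C₂(x, t^G(r; −x²/4))` for finitely supported `r`. -/
theorem M2_eq_neg_C2_shift (N : ℕ) (x : ℂ) (r : ℕ → ℂ)
    (hr : ∀ n, N ≤ n → r n = 0) :
    M2 N x r = -C2 N x (tG N r (-(x ^ 2 / 4))) := by
  have h := congrArg (eval (x ^ 2 / 4)) (quadFormPoly_tG N r hr (-(x ^ 2 / 4)))
  rw [eval_sub, eval_comp, eval_C, eval_add, eval_X, eval_C, add_neg_cancel,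
    quadFormPoly_eval_zero, zero_sub, eval_quadFormPoly, eval_quadFormPoly] at h
  rw [M2, C2, h]
  ring
end

section
/- For every m ≥ 0, Σ_{n=0}^{m} (−1)^n · binom(m+1, n+1) / (2n+1) = 2^{m+1} (m+1)! / (2m+1)!! − 1. -/
/-!
By the hockey-stick identity `C(m+1, n+1) = ∑_{j ≤ m} C(j, n)`, the sum is `T 0 + ⋯ + T m`
with `T j = ∑_k (-1)^k C(j, k) / (2k+1)`. Since `1 / (2k+1) = ½ · 1 / (½ + k)`, `T j` is the
partial-fraction expansion `∑_k (-1)^k C(j, k) / (x + k) = j! / (x (x+1) ⋯ (x+j))` at `x = ½`,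
i.e. `T j = 2^j j! / (2j+1)!!`, and these values telescope to `2^(m+1) (m+1)! / (2m+1)!! - 1`.
-/

open Finset Polynomial

lemma oddDF_succ (n : ℕ) : oddDF (n + 1) = (2 * n + 1) * oddDF n := rfl

section Binomial

variable {R : Type*}

lemma sum_range_choose_succ_mul_eq_sum_sum [Semiring R] (f : ℕ → R) (m : ℕ) :
    ∑ n ∈ range (m + 1), ((m + 1).choose (n + 1) : R) * f n
      = ∑ j ∈ range (m + 1), ∑ n ∈ range (j + 1), (j.choose n : R) * f n := by
  induction m with
  | zero => simp
  | succ m ih =>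
    rw [sum_range_succ (fun j ↦ ∑ n ∈ range (j + 1), (j.choose n : R) * f n), ← ih]
    simp only [Nat.choose_succ_succ' (m + 1), Nat.cast_add, add_mul, sum_add_distrib]
    rw [sum_range_succ (fun n ↦ ((m + 1).choose (n + 1) : R) * f n), Nat.choose_succ_self,
      Nat.cast_zero, zero_mul, add_zero, add_comm]

lemma sum_range_neg_one_pow_mul_choose_succ_mul [CommRing R] (g : ℕ → R) (n : ℕ) :
    ∑ k ∈ range (n + 2), (-1) ^ k * ((n + 1).choose k : R) * g k
      = ∑ k ∈ range (n + 1), (-1) ^ k * (n.choose k : R) * (g k - g (k + 1)) := by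
  have hshift : ∑ k ∈ range (n + 1), (-1) ^ (k + 1) * (n.choose (k + 1) : R) * g (k + 1) + g 0
      = ∑ k ∈ range (n + 1), (-1) ^ k * (n.choose k : R) * g k := by
    have := sum_range_succ' (fun k ↦ (-1) ^ k * (n.choose k : R) * g k) (n + 1)
    rw [sum_range_succ, Nat.choose_succ_self] at this
    simpa using this.symm
  simp only [mul_sub, sum_sub_distrib, ← hshift, sum_range_succ' _ (n + 1), Nat.choose_succ_succ',
    Nat.cast_add, mul_add, add_mul, sum_add_distrib, pow_succ, pow_zero, Nat.choose_zero_right,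
    Nat.cast_one, one_mul, mul_neg, mul_one, neg_mul, sum_neg_distrib]
  ring

end Binomial

section Pochhammer

variable {K : Type*} [Field K]

lemma ascPochhammer_eval_ne_zero {x : K} (hx : ∀ k : ℕ, x + k ≠ 0) (n : ℕ) :
    (ascPochhammer K n).eval x ≠ 0 := by
  rw [Ne, ascPochhammer_eval_eq_zero_iff]
  rintro ⟨k, -, hk⟩
  exact hx k (by rw [hk, add_neg_cancel])

lemma sum_range_neg_one_pow_mul_choose_div_add {x : K} (hx : ∀ k : ℕ, x + k ≠ 0) (n : ℕ) :
    ∑ k ∈ range (n + 1), (-1) ^ k * (n.choose k : K) / (x + k)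
      = n.factorial / (ascPochhammer K (n + 1)).eval x := by
  induction n generalizing x with
  | zero => simp
  | succ n ih =>
    have hx1 : ∀ k : ℕ, x + 1 + k ≠ 0 := fun k ↦ by
      simpa [add_assoc, add_comm (1 : K)] using hx (k + 1)
    have hdiff : ∑ k ∈ range (n + 2), (-1) ^ k * ((n + 1).choose k : K) / (x + k)
        = ∑ k ∈ range (n + 1), (-1) ^ k * (n.choose k : K) / (x + k)
          - ∑ k ∈ range (n + 1), (-1) ^ k * (n.choose k : K) / (x + 1 + k) := by
      simp only [div_eq_mul_inv]
      rw [sum_range_neg_one_pow_mul_choose_succ_mul, ← sum_sub_distrib]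
      refine sum_congr rfl fun k _ ↦ ?_
      push_cast
      ring
    have hright : (ascPochhammer K (n + 2)).eval x
        = (ascPochhammer K (n + 1)).eval x * (x + (n + 1)) := by
      simp [ascPochhammer_succ_eval]
    have hleft : (ascPochhammer K (n + 2)).eval x = x * (ascPochhammer K (n + 1)).eval (x + 1) := by
      simp [ascPochhammer_succ_left]
    have h0 := ascPochhammer_eval_ne_zero hx (n + 1)
    have h1 := ascPochhammer_eval_ne_zero hx1 (n + 1)
    have h2 := ascPochhammer_eval_ne_zero hx (n + 2)
    rw [hdiff, ih hx, ih hx1, div_sub_div _ _ h0 h1, div_eq_div_iff (mul_ne_zero h0 h1) h2,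
      Nat.factorial_succ, Nat.cast_mul]
    push_cast
    linear_combination (n.factorial : K) * (ascPochhammer K (n + 1)).eval (x + 1) * hright
      - (n.factorial : K) * (ascPochhammer K (n + 1)).eval x * hleft

end Pochhammer

section OddDF

variable {K : Type*} [Field K] [CharZero K]

lemma two_mul_natCast_add_one_ne_zero (n : ℕ) : (2 * n + 1 : K) ≠ 0 := by
  exact_mod_cast (2 * n).succ_ne_zero

lemma oddDF_cast_ne_zero (n : ℕ) : (oddDF n : K) ≠ 0 := by
  induction n with
  | zero => simp [oddDF]
  | succ n ih => simp [oddDF_succ, ih, two_mul_natCast_add_one_ne_zero]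

lemma ascPochhammer_eval_half (n : ℕ) : (ascPochhammer K n).eval (1 / 2) = oddDF n / 2 ^ n := by
  induction n with
  | zero => simp [oddDF]
  | succ n ih =>
    rw [ascPochhammer_succ_eval, ih, oddDF_succ]
    push_cast
    field_simp
    ring

lemma sum_range_neg_one_pow_mul_choose_div_two_mul_add_one (n : ℕ) :
    ∑ k ∈ range (n + 1), (-1) ^ k * (n.choose k : K) / (2 * k + 1)
      = 2 ^ n * n.factorial / oddDF (n + 1) := by
  have hhalf : ∀ k : ℕ, (1 / 2 : K) + k ≠ 0 := fun k h ↦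
    two_mul_natCast_add_one_ne_zero (K := K) k (by linear_combination 2 * h)
  have hsum := sum_range_neg_one_pow_mul_choose_div_add hhalf n
  rw [ascPochhammer_eval_half, ← div_mul] at hsum
  calc ∑ k ∈ range (n + 1), (-1) ^ k * (n.choose k : K) / (2 * k + 1)
      = 2⁻¹ * ∑ k ∈ range (n + 1), (-1) ^ k * (n.choose k : K) / (1 / 2 + k) := by
        rw [mul_sum]
        refine sum_congr rfl fun k _ ↦ ?_
        rw [show (2 * k + 1 : K) = 2 * (1 / 2 + k) by ring, mul_comm, div_mul_eq_div_div]
        ring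
    _ = 2 ^ n * n.factorial / oddDF (n + 1) := by rw [hsum]; ring

lemma sum_range_two_pow_mul_factorial_div_oddDF (m : ℕ) :
    ∑ j ∈ range (m + 1), (2 ^ j * j.factorial / oddDF (j + 1) : K)
      = 2 ^ (m + 1) * (m + 1).factorial / oddDF (m + 1) - 1 := by
  induction m with
  | zero => norm_num [oddDF]
  | succ m ih =>
    rw [sum_range_succ, ih, oddDF_succ (m + 1), Nat.factorial_succ (m + 1)]
    have := oddDF_cast_ne_zero (K := K) (m + 1)
    have := two_mul_natCast_add_one_ne_zero (K := K) (m + 1)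
    push_cast at this ⊢
    field_simp
    ring

end OddDF

/-- For every `m ≥ 0`,
`∑_{n=0}^{m} (−1)^n binom(m+1, n+1)/(2n+1) = 2^{m+1}(m+1)!/(2m+1)!! − 1`. -/
theorem alternating_binomial_double_factorial (m : ℕ) :
    ∑ n ∈ Finset.range (m + 1),
        (-1 : ℚ) ^ n * ((m + 1).choose (n + 1) : ℚ) / (2 * (n : ℚ) + 1)
      = 2 ^ (m + 1) * (Nat.factorial (m + 1) : ℚ) / (oddDF (m + 1) : ℚ) - 1 := by
  calc _ = ∑ j ∈ range (m + 1), ∑ n ∈ range (j + 1),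
        (j.choose n : ℚ) * ((-1) ^ n / (2 * n + 1)) := by
        rw [← sum_range_choose_succ_mul_eq_sum_sum]
        exact sum_congr rfl fun n _ ↦ by ring
    _ = ∑ j ∈ range (m + 1), (2 ^ j * j.factorial / oddDF (j + 1) : ℚ) := by
        refine sum_congr rfl fun j _ ↦ ?_
        rw [← sum_range_neg_one_pow_mul_choose_div_two_mul_add_one]
        exact sum_congr rfl fun n _ ↦ by ring
    _ = 2 ^ (m + 1) * (Nat.factorial (m + 1) : ℚ) / (oddDF (m + 1) : ℚ) - 1 :=
        sum_range_two_pow_mul_factorial_div_oddDF m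
end
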